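/- If A is a worm all of whose modalities are strictly greater than α (A ∈ 𝕎_{α+1}), then for any worm B, GLP_Λ proves (A ∧ ⟨α⟩B) ↔ A⟨α⟩B, where A⟨α⟩B denotes the concatenation of A, the modality ⟨α⟩, and B. -/

import Mathlib

inductive Formula (L : Type) : Type where
  | bot : Formula L
  | var : Nat → Formula L
  | imp : Formula L → Formula L → Formula L
  | box : L → Formula L → Formula L

namespace Formula

variable {L : Type}

def neg (φ : Formula L) : Formula L := imp φ bot
def top : Formula L := neg bot
def and (φ ψ : Formula L) : Formula L := neg (imp φ ψ.neg)
def or (φ ψ : Formula L) : Formula L := imp φ.neg ψ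
def iff (φ ψ : Formula L) : Formula L := (imp φ ψ).and (imp ψ φ)
def dia (α : L) (φ : Formula L) : Formula L := neg (box α φ.neg)

end Formula

open Formula

/-- Provability in the polymodal provability logic `GLP_Λ` over a linear order. -/
inductive GLP {L : Type} [LinearOrder L] : Formula L → Prop where
  | k1 : ∀ φ ψ : Formula L, GLP (φ.imp (ψ.imp φ))
  | k2 : ∀ φ ψ χ : Formula L, GLP ((φ.imp (ψ.imp χ)).imp ((φ.imp ψ).imp (φ.imp χ)))
  | k3 : ∀ φ ψ : Formula L, GLP ((φ.neg.imp ψ.neg).imp (ψ.imp φ))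
  | dist : ∀ (α : L) (φ ψ : Formula L), GLP ((Formula.box α (φ.imp ψ)).imp ((Formula.box α φ).imp (Formula.box α ψ)))
  | lob : ∀ (α : L) (φ : Formula L), GLP ((Formula.box α ((Formula.box α φ).imp φ)).imp (Formula.box α φ))
  | trans : ∀ (α β : L) (φ : Formula L), α ≤ β → GLP ((Formula.box α φ).imp (Formula.box β (Formula.box α φ)))
  | negintro : ∀ (α β : L) (φ : Formula L), α < β → GLP ((dia α φ).imp (Formula.box β (dia α φ)))
  | mono : ∀ (α β : L) (φ : Formula L), α ≤ β → GLP ((Formula.box α φ).imp (Formula.box β φ))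
  | mp : ∀ φ ψ : Formula L, GLP (φ.imp ψ) → GLP φ → GLP ψ
  | nec : ∀ (α : L) (φ : Formula L), GLP φ → GLP (Formula.box α φ)

/-- The worm (iterated consistency statement) associated to a list of modalities. -/
def worm {L : Type} : List L → Formula L
  | [] => Formula.top
  | α :: w => Formula.dia α (worm w)

/-- `Lt α A B` iff `GLP ⊢ B → ⟨α⟩A`. -/
def Lt {L : Type} [LinearOrder L] (α : L) (A B : List L) : Prop :=
  GLP ((worm B).imp (Formula.dia α (worm A)))

def Le {L : Type} [LinearOrder L] (α : L) (A B : List L) : Prop :=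
  Lt α A B ∨ A = B

/-!
Induct on `A`. The step rests on one fact: for `α < β`, the formula `⟨α⟩ψ` may be moved into and
out of a `⟨β⟩`, i.e. `⟨β⟩φ ∧ ⟨α⟩ψ ↔ ⟨β⟩(φ ∧ ⟨α⟩ψ)`. Inwards because `⟨α⟩ψ → [β]⟨α⟩ψ` and
`⟨β⟩φ ∧ [β]χ → ⟨β⟩(φ ∧ χ)`; outwards because `⟨β⟩⟨α⟩ψ → ⟨α⟩ψ`, the dual of `[α]χ → [β][α]χ`.
-/

section GLPCalculus

variable {L : Type} [LinearOrder L]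

/-- Derivability from hypotheses `Γ` by modus ponens only; as necessitation is never applied to a
hypothesis, the deduction theorem `Derivable.imp_intro` holds. -/
inductive Derivable (Γ : Set (Formula L)) : Formula L → Prop
  | hyp {φ : Formula L} : φ ∈ Γ → Derivable Γ φ
  | thm {φ : Formula L} : GLP φ → Derivable Γ φ
  | mp {φ ψ : Formula L} : Derivable Γ (φ.imp ψ) → Derivable Γ φ → Derivable Γ ψ

theorem GLP.imp_refl (φ : Formula L) : GLP (φ.imp φ) :=
  mp _ _ (mp _ _ (k2 φ (φ.imp φ) φ) (k1 φ (φ.imp φ))) (k1 φ φ)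

namespace Derivable

variable {Γ : Set (Formula L)} {φ ψ χ : Formula L}

theorem imp_intro (h : Derivable (insert φ Γ) ψ) : Derivable Γ (φ.imp ψ) := by
  induction h with
  | hyp h =>
    rcases h with rfl | h
    · exact thm (GLP.imp_refl _)
    · exact mp (thm (GLP.k1 _ _)) (hyp h)
  | thm h => exact mp (thm (GLP.k1 _ _)) (thm h)
  | mp _ _ ihφψ ihφ => exact mp (mp (thm (GLP.k2 _ _ _)) ihφψ) ihφ

theorem glp (h : Derivable ∅ φ) : GLP φ := by
  induction h with
  | hyp h => exact absurd h (Set.notMem_empty _)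
  | thm h => exact h
  | mp _ _ ihφψ ihφ => exact GLP.mp _ _ ihφψ ihφ

theorem of_imp (himp : GLP (φ.imp ψ)) (h : Derivable Γ φ) : Derivable Γ ψ :=
  mp (thm himp) h

/-! `hypₙ` is the hypothesis introduced `n` steps before the most recent one. -/

theorem hyp₀ : Derivable (insert φ Γ) φ := hyp (Set.mem_insert _ _)

theorem hyp₁ : Derivable (insert ψ (insert φ Γ)) φ :=
  hyp (Set.mem_insert_of_mem _ (Set.mem_insert _ _))

theorem hyp₂ : Derivable (insert χ (insert ψ (insert φ Γ))) φ :=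
  hyp (Set.mem_insert_of_mem _ (Set.mem_insert_of_mem _ (Set.mem_insert _ _)))

end Derivable

theorem GLP.imp_trans {φ ψ χ : Formula L} (h₁ : GLP (φ.imp ψ)) (h₂ : GLP (ψ.imp χ)) :
    GLP (φ.imp χ) :=
  Derivable.glp <| .imp_intro <| .of_imp h₂ <| .of_imp h₁ .hyp₀

theorem GLP.not_not_intro (φ : Formula L) : GLP (φ.imp φ.neg.neg) :=
  Derivable.glp <| .imp_intro <| .imp_intro <| .mp .hyp₀ .hyp₁

theorem GLP.not_not_elim (φ : Formula L) : GLP (φ.neg.neg.imp φ) :=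
  mp _ _ (k3 φ φ.neg.neg) (not_not_intro φ.neg)

theorem Derivable.by_contra {Γ : Set (Formula L)} {φ : Formula L}
    (h : Derivable (insert φ.neg Γ) Formula.bot) : Derivable Γ φ :=
  of_imp (GLP.not_not_elim φ) (imp_intro h)

theorem GLP.bot_elim (φ : Formula L) : GLP (Formula.bot.imp φ) :=
  imp_trans (k1 Formula.bot φ.neg) (not_not_elim φ)

theorem GLP.top : GLP (Formula.top : Formula L) := imp_refl Formula.bot

theorem GLP.contrapose {φ ψ : Formula L} (h : GLP (φ.imp ψ)) : GLP (ψ.neg.imp φ.neg) :=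
  Derivable.glp <| .imp_intro <| .imp_intro <| .mp .hyp₁ (.of_imp h .hyp₀)

theorem GLP.and_intro (φ ψ : Formula L) : GLP (φ.imp (ψ.imp (φ.and ψ))) :=
  Derivable.glp <| .imp_intro <| .imp_intro <| .imp_intro <| .mp (.mp .hyp₀ .hyp₂) .hyp₁

theorem GLP.and_left (φ ψ : Formula L) : GLP ((φ.and ψ).imp φ) :=
  Derivable.glp <| .imp_intro <| .by_contra <| .mp .hyp₁ <| .imp_intro <|
    .of_imp (bot_elim ψ.neg) (.mp .hyp₁ .hyp₀)

theorem GLP.and_right (φ ψ : Formula L) : GLP ((φ.and ψ).imp ψ) :=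
  Derivable.glp <| .imp_intro <| .by_contra <| .mp .hyp₁ <| .of_imp (k1 ψ.neg φ) .hyp₀

theorem GLP.imp_and {χ φ ψ : Formula L} (h₁ : GLP (χ.imp φ)) (h₂ : GLP (χ.imp ψ)) :
    GLP (χ.imp (φ.and ψ)) :=
  Derivable.glp <| .imp_intro <|
    .mp (.of_imp (and_intro φ ψ) (.of_imp h₁ .hyp₀)) (.of_imp h₂ .hyp₀)

theorem GLP.iff_intro {φ ψ : Formula L} (h₁ : GLP (φ.imp ψ)) (h₂ : GLP (ψ.imp φ)) :
    GLP (φ.iff ψ) :=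
  mp _ _ (mp _ _ (and_intro _ _) h₁) h₂

theorem GLP.iff_mp {φ ψ : Formula L} (h : GLP (φ.iff ψ)) : GLP (φ.imp ψ) :=
  mp _ _ (and_left _ _) h

theorem GLP.iff_mpr {φ ψ : Formula L} (h : GLP (φ.iff ψ)) : GLP (ψ.imp φ) :=
  mp _ _ (and_right _ _) h

theorem GLP.iff_trans {φ ψ χ : Formula L} (h₁ : GLP (φ.iff ψ)) (h₂ : GLP (ψ.iff χ)) :
    GLP (φ.iff χ) :=
  iff_intro (imp_trans (iff_mp h₁) (iff_mp h₂)) (imp_trans (iff_mpr h₂) (iff_mpr h₁))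

theorem GLP.top_and_iff (φ : Formula L) : GLP ((Formula.top.and φ).iff φ) :=
  iff_intro (and_right _ _) (imp_and (mp _ _ (k1 _ φ) top) (imp_refl φ))

theorem GLP.box_mono {φ ψ : Formula L} (γ : L) (h : GLP (φ.imp ψ)) :
    GLP ((box γ φ).imp (box γ ψ)) :=
  mp _ _ (dist γ φ ψ) (nec γ _ h)

theorem GLP.dia_mono {φ ψ : Formula L} (γ : L) (h : GLP (φ.imp ψ)) :
    GLP ((dia γ φ).imp (dia γ ψ)) :=
  contrapose (box_mono γ (contrapose h))

theorem GLP.dia_congr {φ ψ : Formula L} (γ : L) (h : GLP (φ.iff ψ)) :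
    GLP ((dia γ φ).iff (dia γ ψ)) :=
  iff_intro (dia_mono γ (iff_mp h)) (dia_mono γ (iff_mpr h))

theorem GLP.dia_dia_of_le {α β : L} (φ : Formula L) (h : α ≤ β) :
    GLP ((dia β (dia α φ)).imp (dia α φ)) :=
  contrapose (imp_trans (GLP.trans α β φ.neg h) (box_mono β (not_not_intro _)))

theorem GLP.dia_and_box (γ : L) (φ ψ : Formula L) :
    GLP (((dia γ φ).and (box γ ψ)).imp (dia γ (φ.and ψ))) := by
  have hψ : GLP (ψ.imp ((φ.and ψ).neg.imp φ.neg)) :=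
    Derivable.glp <| .imp_intro <| .imp_intro <| .imp_intro <|
      .mp .hyp₁ (.mp (.of_imp (and_intro φ ψ) .hyp₀) .hyp₂)
  have hbox : GLP ((box γ ψ).imp ((box γ (φ.and ψ).neg).imp (box γ φ.neg))) :=
    imp_trans (box_mono γ hψ) (dist γ _ _)
  exact Derivable.glp <| .imp_intro <| .imp_intro <|
    .mp (.of_imp (and_left _ _) .hyp₁)
      (.mp (.of_imp hbox (.of_imp (and_right _ _) .hyp₁)) .hyp₀)

theorem GLP.dia_and_dia_iff {α β : L} (φ ψ : Formula L) (h : α < β) :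
    GLP (((dia β φ).and (dia α ψ)).iff (dia β (φ.and (dia α ψ)))) := by
  have hin : GLP (((dia β φ).and (dia α ψ)).imp ((dia β φ).and (box β (dia α ψ)))) :=
    imp_and (and_left _ _) (imp_trans (and_right _ _) (negintro α β ψ h))
  have hout : GLP ((dia β (φ.and (dia α ψ))).imp (dia α ψ)) :=
    imp_trans (dia_mono β (and_right _ _)) (dia_dia_of_le ψ h.le)
  exact iff_intro (imp_trans hin (dia_and_box β _ _)) (imp_and (dia_mono β (and_left _ _)) hout)

end GLPCalculus

/-- If all modalities of the worm `A` are `> α`, then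
`GLP ⊢ (A ∧ ⟨α⟩B) ↔ A⟨α⟩B`. -/
theorem and_dia_eq_concat {L : Type} [LinearOrder L] (α : L) (A B : List L)
    (hA : ∀ β ∈ A, α < β) :
    GLP (((worm A).and (Formula.dia α (worm B))).iff (worm (A ++ α :: B))) := by
  induction A with
  | nil => exact GLP.top_and_iff _
  | cons β A ih =>
    have hβ : α < β := hA β List.mem_cons_self
    have ih := ih fun γ hγ => hA γ (List.mem_cons_of_mem β hγ)
    exact GLP.iff_trans (GLP.dia_and_dia_iff _ _ hβ) (GLP.dia_congr β ih)
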